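/- arXiv:1701.03971 — 8 statements merged into one kernel-verified Lean document; each statement's English description precedes it below -/
import Mathlib

section
/- For all μ > 0 and r > 0, the generalized Mathieu series satisfies the Turán type inequality S_{μ+2}(r)·S_μ(r) − S_{μ+1}(r)² ≥ 0. -/
/-!
The terms `aₙ(μ) = 2n / (n² + r²)^(μ+1)` of the Mathieu series are geometric in `μ`, so
`aₙ(μ+1)² = aₙ(μ+2) · aₙ(μ)` for every `n`. The Cauchy–Schwarz inequality for convergent series
of nonnegative terms then gives `S_{μ+1}(r)² ≤ S_{μ+2}(r) · S_μ(r)`.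
-/

open Real

noncomputable def mathieuS (μ r : ℝ) : ℝ :=
  ∑' n : ℕ, (2 * ((n : ℝ) + 1)) / ((((n : ℝ) + 1) ^ 2 + r ^ 2) ^ (μ + 1))

noncomputable def zetaR (s : ℝ) : ℝ := ∑' n : ℕ, ((n : ℝ) + 1) ^ (-s)

open Filter

theorem tsum_sq_le_tsum_mul_tsum_of_sq_le_mul {ι : Type*} {f g h : ι → ℝ}
    (hf : ∀ i, 0 ≤ f i) (hh : ∀ i, 0 ≤ h i) (hfs : Summable f) (hhs : Summable h)
    (hg : ∀ i, g i ^ 2 ≤ f i * h i) :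
    (∑' i, g i) ^ 2 ≤ (∑' i, f i) * ∑' i, h i := by
  have hgs : Summable g := by
    refine ((hfs.add hhs).div_const 2).of_norm_bounded fun i => ?_
    -- `|g i| ≤ (f i + h i) / 2` by AM-GM
    rw [Real.norm_eq_abs]
    nlinarith [sq_abs (g i), sq_nonneg (f i - h i), hg i, hf i, hh i, abs_nonneg (g i)]
  exact le_of_tendsto_of_tendsto' (hgs.hasSum.pow 2) (Tendsto.mul hfs.hasSum hhs.hasSum)
    fun s => Finset.sum_sq_le_sum_mul_sum_of_sq_le_mul s (fun i _ => hf i) (fun i _ => hh i)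
      fun i _ => hg i

noncomputable def mathieuTerm (μ r : ℝ) (n : ℕ) : ℝ :=
  (2 * ((n : ℝ) + 1)) / ((((n : ℝ) + 1) ^ 2 + r ^ 2) ^ (μ + 1))

theorem mathieuS_eq_tsum (μ r : ℝ) : mathieuS μ r = ∑' n, mathieuTerm μ r n := rfl

theorem mathieuTerm_nonneg (μ r : ℝ) (n : ℕ) : 0 ≤ mathieuTerm μ r n := by
  unfold mathieuTerm; positivity

theorem mathieuTerm_sq (μ r : ℝ) (n : ℕ) :
    mathieuTerm (μ + 1) r n ^ 2 = mathieuTerm (μ + 2) r n * mathieuTerm μ r n := by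
  have hA : 0 < ((n : ℝ) + 1) ^ 2 + r ^ 2 := by positivity
  rw [mathieuTerm, mathieuTerm, mathieuTerm, div_pow, div_mul_div_comm, ← rpow_add hA,
    ← rpow_mul_natCast hA.le]
  ring_nf

theorem mathieuTerm_le_rpow (μ r : ℝ) (hμ : -1 ≤ μ) (n : ℕ) :
    mathieuTerm μ r n ≤ 2 * (1 / |(n : ℝ) + 1| ^ (2 * μ + 1)) := by
  have hx : (0 : ℝ) < n + 1 := by positivity
  have hpow : (((n : ℝ) + 1) ^ 2) ^ (μ + 1) = ((n : ℝ) + 1) * ((n : ℝ) + 1) ^ (2 * μ + 1) := by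
    rw [← rpow_natCast, ← rpow_mul hx.le, show ((2 : ℕ) : ℝ) * (μ + 1) = 1 + (2 * μ + 1) by
      push_cast; ring, rpow_add hx, rpow_one]
  calc mathieuTerm μ r n ≤ 2 * ((n : ℝ) + 1) / (((n : ℝ) + 1) ^ 2) ^ (μ + 1) := by
        unfold mathieuTerm
        gcongr
        · linarith
        · exact le_add_of_nonneg_right (sq_nonneg r)
    _ = 2 * (1 / |(n : ℝ) + 1| ^ (2 * μ + 1)) := by
        rw [hpow, abs_of_pos hx]
        field_simp

theorem summable_mathieuTerm (r : ℝ) {μ : ℝ} (hμ : 0 < μ) : Summable (mathieuTerm μ r) := by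
  have hp : Summable fun n : ℕ ↦ 1 / |(n : ℝ) + 1| ^ (2 * μ + 1) :=
    (summable_one_div_nat_add_rpow 1 _).2 (by linarith)
  exact (hp.mul_left 2).of_nonneg_of_le (mathieuTerm_nonneg μ r)
    (mathieuTerm_le_rpow μ r (by linarith))

theorem stmt0_general (μ r : ℝ) (hμ : 0 < μ) :
    mathieuS (μ + 2) r * mathieuS μ r - (mathieuS (μ + 1) r) ^ 2 ≥ 0 := by
  have hcs := tsum_sq_le_tsum_mul_tsum_of_sq_le_mul (mathieuTerm_nonneg (μ + 2) r)
    (mathieuTerm_nonneg μ r) (summable_mathieuTerm r (by linarith)) (summable_mathieuTerm r hμ)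
    fun n => (mathieuTerm_sq μ r n).le
  simp only [mathieuS_eq_tsum]
  linarith

theorem stmt0 (μ r : ℝ) (hμ : 0 < μ) (hr : 0 < r) :
    mathieuS (μ + 2) r * mathieuS μ r - (mathieuS (μ + 1) r) ^ 2 ≥ 0 :=
  stmt0_general μ r hμ
end

section
/- For every fixed r > 0, the function μ ↦ S_μ(r) is completely monotonic on (0,∞), i.e., for all m ∈ ℕ and μ > 0, (−1)^m ∂^m/∂μ^m S_μ(r) ≥ 0. -/
open Real

/-! Termwise, `∂ₛ (c a⁻ˢ) = (-log a) c a⁻ˢ`, so the `m`-th derivative of `∑ cₙ aₙ⁻ˢ` is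
`∑ (-log aₙ)ᵐ cₙ aₙ⁻ˢ`. When `aₙ ≥ 1` and `cₙ ≥ 0`, multiplying by `(-1)ᵐ` leaves a series of
nonnegative terms. Differentiation under the sum is justified on every half-line of absolute
convergence, because `log a ≤ a^δ / δ` lets a logarithmic factor be absorbed by an arbitrarily small
loss in the exponent. The Mathieu series is such a series evaluated at `s = μ + 1`, with
`aₙ = (n+1)² + r²`, and it converges absolutely for `s > 1`. -/

noncomputable def dirichletSum (c a : ℕ → ℝ) (s : ℝ) : ℝ := ∑' n, c n * a n ^ (-s)

section DirichletSum

variable {c a : ℕ → ℝ} {σ : ℝ}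

lemma summable_abs_neg_log_mul_rpow_neg (ha : ∀ n, 1 ≤ a n)
    (hc : ∀ s, σ < s → Summable fun n => |c n| * a n ^ (-s)) {s : ℝ} (hs : σ < s) :
    Summable fun n => |-log (a n) * c n| * a n ^ (-s) := by
  set δ := (s - σ) / 2
  have hδ : 0 < δ := by simp only [δ]; linarith
  have han n : 0 < a n := one_pos.trans_le (ha n)
  refine .of_nonneg_of_le (fun n => mul_nonneg (abs_nonneg _) (rpow_nonneg (han n).le _))
    (fun n => ?_) ((hc (s - δ) (by simp only [δ]; linarith)).mul_left δ⁻¹)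
  calc |-log (a n) * c n| * a n ^ (-s) = log (a n) * (|c n| * a n ^ (-s)) := by
        rw [abs_mul, abs_neg, abs_of_nonneg (log_nonneg (ha n))]; ring
    _ ≤ a n ^ δ / δ * (|c n| * a n ^ (-s)) := by
        gcongr
        · exact mul_nonneg (abs_nonneg _) (rpow_nonneg (han n).le _)
        · exact log_le_rpow_div (han n).le hδ
    _ = δ⁻¹ * (|c n| * a n ^ (-(s - δ))) := by
        rw [neg_sub, sub_eq_add_neg, rpow_add (han n)]; ring

lemma summable_abs_neg_log_pow_mul_rpow_neg (ha : ∀ n, 1 ≤ a n)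
    (hc : ∀ s, σ < s → Summable fun n => |c n| * a n ^ (-s)) (m : ℕ) :
    ∀ s, σ < s → Summable fun n => |(-log (a n)) ^ m * c n| * a n ^ (-s) := by
  induction m with
  | zero => simpa using hc
  | succ m ih =>
    intro s hs
    simpa only [pow_succ', mul_assoc] using summable_abs_neg_log_mul_rpow_neg ha ih hs

lemma hasDerivAt_dirichletSum (ha : ∀ n, 1 ≤ a n)
    (hc : ∀ s, σ < s → Summable fun n => |c n| * a n ^ (-s)) {s : ℝ} (hs : σ < s) :
    HasDerivAt (dirichletSum c a) (dirichletSum (fun n => -log (a n) * c n) a s) s := by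
  set s₀ := (σ + s) / 2
  have hs₀ : s₀ < s := by simp only [s₀]; linarith
  have han n : 0 < a n := one_pos.trans_le (ha n)
  refine hasDerivAt_tsum_of_isPreconnected (g := fun n t => c n * a n ^ (-t))
    (g' := fun n t => -log (a n) * c n * a n ^ (-t)) (u := fun n => |-log (a n) * c n| * a n ^ (-s₀))
    (summable_abs_neg_log_mul_rpow_neg ha hc (show σ < s₀ by simp only [s₀]; linarith))
    isOpen_Ioi isPreconnected_Ioi (fun n y _ => ?_) (fun n y hy => ?_) hs₀
    (.of_norm ?_) (Set.mem_Ioi.2 hs₀)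
  · exact (((hasDerivAt_neg y).const_rpow (han n)).const_mul (c n)).congr_deriv (by ring)
  · rw [norm_mul, Real.norm_eq_abs, norm_of_nonneg (rpow_nonneg (han n).le _)]
    gcongr
    · exact ha n
    · exact le_of_lt hy
  · simpa [abs_mul, abs_of_nonneg (rpow_nonneg (han _).le _)] using hc s hs

lemma iteratedDeriv_dirichletSum (ha : ∀ n, 1 ≤ a n)
    (hc : ∀ s, σ < s → Summable fun n => |c n| * a n ^ (-s)) (m : ℕ) {s : ℝ} (hs : σ < s) :
    iteratedDeriv m (dirichletSum c a) s = dirichletSum (fun n => (-log (a n)) ^ m * c n) a s := by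
  induction m generalizing s with
  | zero => simp
  | succ m ih =>
    have hderiv : iteratedDeriv m (dirichletSum c a) =ᶠ[nhds s]
        dirichletSum (fun n => (-log (a n)) ^ m * c n) a :=
      Filter.eventually_of_mem (isOpen_Ioi.mem_nhds hs) fun t ht => ih ht
    rw [iteratedDeriv_succ, hderiv.deriv_eq,
      (hasDerivAt_dirichletSum ha (summable_abs_neg_log_pow_mul_rpow_neg ha hc m) hs).deriv]
    simp only [pow_succ', mul_assoc]

theorem neg_one_pow_mul_iteratedDeriv_dirichletSum_nonneg (ha : ∀ n, 1 ≤ a n)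
    (hc₀ : ∀ n, 0 ≤ c n) (hc : ∀ s, σ < s → Summable fun n => |c n| * a n ^ (-s)) (m : ℕ)
    {s : ℝ} (hs : σ < s) :
    0 ≤ (-1) ^ m * iteratedDeriv m (dirichletSum c a) s := by
  rw [iteratedDeriv_dirichletSum ha hc m hs, dirichletSum, ← tsum_mul_left]
  refine tsum_nonneg fun n => ?_
  calc (0 : ℝ) ≤ log (a n) ^ m * c n * a n ^ (-s) :=
        mul_nonneg (mul_nonneg (pow_nonneg (log_nonneg (ha n)) m) (hc₀ n))
          (rpow_nonneg (zero_le_one.trans (ha n)) _)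
    _ = (-1) ^ m * ((-log (a n)) ^ m * c n * a n ^ (-s)) := by
        rw [mul_assoc, mul_assoc, ← mul_assoc ((-1) ^ m), ← mul_pow]; simp

end DirichletSum

lemma mathieuS_eq_dirichletSum (μ r : ℝ) :
    mathieuS μ r = dirichletSum (fun n => 2 * ((n : ℝ) + 1)) (fun n => ((n : ℝ) + 1) ^ 2 + r ^ 2)
      (μ + 1) := by
  refine tsum_congr fun n => ?_
  rw [rpow_neg (by positivity), div_eq_mul_inv]

lemma summable_mathieu_terms (r : ℝ) {s : ℝ} (hs : 1 < s) :
    Summable fun n : ℕ => |2 * ((n : ℝ) + 1)| * (((n : ℝ) + 1) ^ 2 + r ^ 2) ^ (-s) := by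
  have hp : Summable fun n : ℕ => ((n + 1 : ℕ) : ℝ) ^ (1 - 2 * s) :=
    (summable_nat_add_iff 1).2 (summable_nat_rpow.2 (by linarith))
  refine .of_nonneg_of_le (fun n => by positivity) (fun n => ?_) (hp.mul_left 2)
  have hn : (0 : ℝ) < n + 1 := by positivity
  calc |2 * ((n : ℝ) + 1)| * (((n : ℝ) + 1) ^ 2 + r ^ 2) ^ (-s)
      ≤ 2 * ((n : ℝ) + 1) * (((n : ℝ) + 1) ^ 2) ^ (-s) := by
        rw [abs_of_pos (by positivity)]
        exact mul_le_mul_of_nonneg_left (rpow_le_rpow_of_nonpos (by positivity)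
          (le_add_of_nonneg_right (sq_nonneg r)) (by linarith)) (by positivity)
    _ = 2 * ((n + 1 : ℕ) : ℝ) ^ (1 - 2 * s) := by
        push_cast
        rw [← rpow_natCast, ← rpow_mul hn.le, rpow_sub hn, rpow_one, mul_neg, rpow_neg hn.le]
        push_cast; ring

theorem stmt1_general (r : ℝ) (m : ℕ) (μ : ℝ) (hμ : 0 < μ) :
    (-1 : ℝ) ^ m * iteratedDeriv m (fun t => mathieuS t r) μ ≥ 0 := by
  simp only [mathieuS_eq_dirichletSum, iteratedDeriv_comp_add_const]
  exact neg_one_pow_mul_iteratedDeriv_dirichletSum_nonneg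
    (fun n => by nlinarith [sq_nonneg r, n.cast_nonneg (α := ℝ)])
    (fun n => by positivity) (fun s hs => summable_mathieu_terms r hs) m
    (by linarith : (1 : ℝ) < μ + 1)

theorem stmt1 (r : ℝ) (hr : 0 < r) (m : ℕ) (μ : ℝ) (hμ : 0 < μ) :
    (-1 : ℝ) ^ m * iteratedDeriv m (fun t => mathieuS t r) μ ≥ 0 :=
  stmt1_general r m μ hμ
end

section
/- For every fixed r > 0, the function μ ↦ S_{μ+1}(r)/S_μ(r) is increasing on (0,∞). -/
/-!
Write `q n = (n + 1)² + r²` and `a n = 2 (n + 1) / q n ^ (μ + 1)`, so that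
`S_{μ+σ}(r) = ∑ a n · q n ^ (-σ)`. The sequences `q ^ (-δ)` and `q ^ (-1)` are similarly ordered
(both decrease in `q`), so Chebyshev's sum inequality with weights `a` gives
`S_{μ+δ} S_{μ+1} ≤ S_μ S_{μ+δ+1}`; with `δ = ν - μ` this is the claimed monotonicity of the ratio.
Chebyshev's inequality for series comes from summing `a i a j (f i - f j) (g i - g j) ≥ 0`
over all pairs, i.e. from comparing a double series with its symmetrization.
-/

open Real

theorem tsum_le_tsum_of_add_swap_le {ι : Type*} {F G : ι × ι → ℝ} (hF : Summable F)
    (hG : Summable G) (h : ∀ p, F p + F p.swap ≤ G p + G p.swap) :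
    ∑' p, F p ≤ ∑' p, G p := by
  have hF_swap : Summable (fun p : ι × ι ↦ F p.swap) := (Equiv.prodComm ι ι).summable_iff.2 hF
  have hG_swap : Summable (fun p : ι × ι ↦ G p.swap) := (Equiv.prodComm ι ι).summable_iff.2 hG
  have hsum := Summable.tsum_le_tsum h (hF.add hF_swap) (hG.add hG_swap)
  have hF_eq : ∑' p : ι × ι, F p.swap = ∑' p, F p := (Equiv.prodComm ι ι).tsum_eq F
  have hG_eq : ∑' p : ι × ι, G p.swap = ∑' p, G p := (Equiv.prodComm ι ι).tsum_eq G
  rw [hF.tsum_add hF_swap, hG.tsum_add hG_swap, hF_eq, hG_eq] at hsum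
  linarith

theorem Monovary.tsum_mul_tsum_le_tsum_mul_tsum {ι : Type*} {w f g : ι → ℝ}
    (hfg : Monovary f g) (hw : 0 ≤ w) (hw_sum : Summable w)
    (hf_sum : Summable (fun i ↦ w i * f i)) (hg_sum : Summable (fun i ↦ w i * g i))
    (hfg_sum : Summable (fun i ↦ w i * f i * g i)) :
    (∑' i, w i * f i) * ∑' i, w i * g i ≤ (∑' i, w i) * ∑' i, w i * f i * g i := by
  have hw_norm : Summable (fun i ↦ ‖w i‖) := hw_sum.abs
  have hf_norm : Summable (fun i ↦ ‖w i * f i‖) := hf_sum.abs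
  have hg_norm : Summable (fun i ↦ ‖w i * g i‖) := hg_sum.abs
  have hfg_norm : Summable (fun i ↦ ‖w i * f i * g i‖) := hfg_sum.abs
  rw [tsum_mul_tsum_of_summable_norm hf_norm hg_norm,
    tsum_mul_tsum_of_summable_norm hw_norm hfg_norm]
  have hF := summable_mul_of_summable_norm hf_norm hg_norm
  have hG := summable_mul_of_summable_norm hw_norm hfg_norm
  refine tsum_le_tsum_of_add_swap_le hF hG fun p ↦ ?_
  have := mul_le_mul_of_nonneg_left (hfg.mul_add_mul_le_mul_add_mul p.1 p.2)
    (mul_nonneg (hw p.1) (hw p.2))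
  simp only [Prod.fst_swap, Prod.snd_swap]
  linarith

theorem monovary_rpow_of_nonpos {ι : Type*} {q : ι → ℝ} (hq : ∀ i, 0 < q i) {a b : ℝ}
    (ha : a ≤ 0) (hb : b ≤ 0) : Monovary (fun i ↦ q i ^ a) (fun i ↦ q i ^ b) := by
  intro i j hij
  have hqji : q j < q i := by
    by_contra! h
    exact hij.not_ge (rpow_le_rpow_of_nonpos (hq i) h hb)
  exact rpow_le_rpow_of_nonpos (hq j) hqji.le ha

namespace Mathieu

noncomputable def base (r : ℝ) (n : ℕ) : ℝ := ((n : ℝ) + 1) ^ 2 + r ^ 2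

noncomputable def term (μ r : ℝ) (n : ℕ) : ℝ := 2 * ((n : ℝ) + 1) / base r n ^ (μ + 1)

theorem mathieuS_eq_tsum (μ r : ℝ) : mathieuS μ r = ∑' n, term μ r n := rfl

theorem base_pos (r : ℝ) (n : ℕ) : 0 < base r n := by
  unfold base
  positivity

theorem term_pos (μ r : ℝ) (n : ℕ) : 0 < term μ r n := by
  have := base_pos r n
  unfold term
  positivity

theorem term_add (μ δ r : ℝ) (n : ℕ) : term (μ + δ) r n = term μ r n * base r n ^ (-δ) := by
  have hq := base_pos r n
  rw [term, term, add_right_comm, rpow_add hq, rpow_neg hq.le]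
  field_simp

theorem term_le {μ : ℝ} (r : ℝ) (n : ℕ) (hμ : -1 ≤ μ) :
    term μ r n ≤ 2 * ((n : ℝ) + 1) ^ (-(2 * μ + 1)) := by
  have hn : (0 : ℝ) < (n : ℝ) + 1 := by positivity
  have hbase : ((n : ℝ) + 1) ^ (2 * μ + 2) ≤ base r n ^ (μ + 1) := by
    rw [show 2 * μ + 2 = (2 : ℕ) * (μ + 1) by push_cast; ring, rpow_natCast_mul hn.le]
    exact rpow_le_rpow (by positivity) (le_add_of_nonneg_right (sq_nonneg r)) (by linarith)
  calc term μ r n ≤ 2 * ((n : ℝ) + 1) / ((n : ℝ) + 1) ^ (2 * μ + 2) :=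
        div_le_div_of_nonneg_left (by positivity) (by positivity) hbase
    _ = 2 * ((n : ℝ) + 1) ^ (-(2 * μ + 1)) := by
        rw [show -(2 * μ + 1) = 1 - (2 * μ + 2) by ring, rpow_sub hn, rpow_one, mul_div_assoc]

theorem summable_term {μ : ℝ} (r : ℝ) (hμ : 0 < μ) : Summable (term μ r) := by
  have hzeta : Summable (fun n : ℕ ↦ ((n : ℝ) + 1) ^ (-(2 * μ + 1))) := by
    have := (summable_nat_add_iff 1).2 (Real.summable_nat_rpow.2 (by linarith : -(2 * μ + 1) < -1))
    exact_mod_cast this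
  exact (hzeta.mul_left 2).of_nonneg_of_le (fun n ↦ (term_pos μ r n).le)
    fun n ↦ term_le r n (by linarith)

theorem mathieuS_pos {μ : ℝ} (r : ℝ) (hμ : 0 < μ) : 0 < mathieuS μ r :=
  (summable_term r hμ).tsum_pos (fun n ↦ (term_pos μ r n).le) 0 (term_pos μ r 0)

theorem mathieuS_mul_mathieuS_le {μ δ ε : ℝ} (r : ℝ) (hμ : 0 < μ) (hδ : 0 ≤ δ) (hε : 0 ≤ ε) :
    mathieuS (μ + δ) r * mathieuS (μ + ε) r ≤ mathieuS μ r * mathieuS (μ + δ + ε) r := by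
  have hδ_term : term (μ + δ) r = fun n ↦ term μ r n * base r n ^ (-δ) := funext (term_add μ δ r)
  have hε_term : term (μ + ε) r = fun n ↦ term μ r n * base r n ^ (-ε) := funext (term_add μ ε r)
  have hδε_term : term (μ + δ + ε) r =
      fun n ↦ term μ r n * base r n ^ (-δ) * base r n ^ (-ε) := by
    funext n
    rw [term_add, term_add]
  have hmono := monovary_rpow_of_nonpos (base_pos r) (neg_nonpos.2 hδ) (neg_nonpos.2 hε)
  simp only [mathieuS_eq_tsum, hδ_term, hε_term, hδε_term]
  exact hmono.tsum_mul_tsum_le_tsum_mul_tsum (fun n ↦ (term_pos μ r n).le) (summable_term r hμ)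
    (hδ_term ▸ summable_term r (by linarith)) (hε_term ▸ summable_term r (by linarith))
    (hδε_term ▸ summable_term r (by linarith))

end Mathieu

theorem stmt3_general (r : ℝ) (μ ν : ℝ) (hμ : 0 < μ) (hμν : μ ≤ ν) :
    mathieuS (μ + 1) r / mathieuS μ r ≤ mathieuS (ν + 1) r / mathieuS ν r := by
  rw [div_le_div_iff₀ (Mathieu.mathieuS_pos r hμ) (Mathieu.mathieuS_pos r (hμ.trans_le hμν))]
  have h := Mathieu.mathieuS_mul_mathieuS_le r hμ (sub_nonneg.2 hμν) zero_le_one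
  rw [add_sub_cancel] at h
  linarith

theorem stmt3 (r : ℝ) (hr : 0 < r) (μ ν : ℝ) (hμ : 0 < μ) (hμν : μ ≤ ν) :
    mathieuS (μ + 1) r / mathieuS μ r ≤ mathieuS (ν + 1) r / mathieuS ν r :=
  stmt3_general r μ ν hμ hμν
end

section
/- For all μ > 1/2 and r > 0, the integral of the generalized Mathieu series over (0,∞) satisfies ∫_0^∞ S_μ(r) dr = √π · Γ(μ+1/2) · ζ(2μ) / Γ(μ+1). -/
open Real

/-!
Integrating term by term (the terms are nonnegative), the scaling `r = a t` turns the term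
`2a / (a² + r²)^(μ+1)` with `a = n + 1` into `a^(-2μ)` times `∫₀^∞ (1 + t²)^(-(μ+1)) dt`, and the
sum over `n` produces `ζ(2μ)`. The substitution `x = t² / (1 + t²)` identifies
`2 ∫₀^∞ (1 + t²)^(-s) dt` with the Beta integral `B(1/2, s - 1/2) = √π Γ(s - 1/2) / Γ(s)`.
-/

open MeasureTheory Set

theorem integral_Ioo_rpow_mul_one_sub_rpow {u v : ℝ} (hu : 0 < u) (hv : 0 < v) :
    ∫ x in Ioo (0 : ℝ) 1, x ^ (u - 1) * (1 - x) ^ (v - 1) = Gamma u * Gamma v / Gamma (u + v) := by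
  have hcoe : ∀ x ∈ Ioo (0 : ℝ) 1, (x : ℂ) ^ ((u : ℂ) - 1) * (1 - (x : ℂ)) ^ ((v : ℂ) - 1) =
      ((x ^ (u - 1) * (1 - x) ^ (v - 1) : ℝ) : ℂ) := fun x hx => by
    rw [Complex.ofReal_mul, Complex.ofReal_cpow hx.1.le,
      Complex.ofReal_cpow (sub_nonneg.2 hx.2.le)]
    push_cast
    rfl
  rw [← ProbabilityTheory.beta, ProbabilityTheory.beta_eq_betaIntegralReal u v hu hv,
    Complex.betaIntegral, intervalIntegral.integral_of_le zero_le_one, integral_Ioc_eq_integral_Ioo,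
    setIntegral_congr_fun measurableSet_Ioo hcoe, integral_complex_ofReal, Complex.ofReal_re]

theorem strictMonoOn_sq_div_one_add_sq :
    StrictMonoOn (fun t : ℝ => t ^ 2 / (1 + t ^ 2)) (Ioi 0) := by
  intro a ha b hb hab
  rw [mem_Ioi] at ha hb
  simp only
  rw [div_lt_div_iff₀ (by positivity) (by positivity)]
  nlinarith [mul_lt_mul'' hab hab ha.le ha.le]

theorem image_sq_div_one_add_sq_Ioi : (fun t : ℝ => t ^ 2 / (1 + t ^ 2)) '' Ioi 0 = Ioo 0 1 := by
  ext x
  constructor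
  · rintro ⟨t, ht, rfl⟩
    rw [mem_Ioi] at ht
    exact ⟨by positivity, (div_lt_one (by positivity)).2 (by linarith)⟩
  · rintro ⟨hx0, hx1⟩
    have hpos : 0 < x / (1 - x) := div_pos hx0 (by linarith)
    refine ⟨√(x / (1 - x)), sqrt_pos.2 hpos, ?_⟩
    simp only [sq_sqrt hpos.le]
    field_simp [(by linarith : 1 - x ≠ 0)]
    ring

theorem abs_deriv_mul_beta_integrand (s : ℝ) {t : ℝ} (ht : 0 < t) :
    |2 * t / (1 + t ^ 2) ^ 2| *
      ((t ^ 2 / (1 + t ^ 2)) ^ (1 / 2 - 1 : ℝ) * (1 - t ^ 2 / (1 + t ^ 2)) ^ (s - 1 / 2 - 1)) =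
      2 * (1 + t ^ 2) ^ (-s) := by
  have hd : 0 < 1 + t ^ 2 := by positivity
  have h1 : (t ^ 2 / (1 + t ^ 2)) ^ (1 / 2 - 1 : ℝ) = (1 + t ^ 2) ^ (1 / 2 : ℝ) / t := by
    rw [show (1 / 2 - 1 : ℝ) = -(1 / 2) by norm_num, rpow_neg (by positivity), ← sqrt_eq_rpow,
      sqrt_div' _ hd.le, sqrt_sq ht.le, inv_div, sqrt_eq_rpow]
  have h2 : 1 - t ^ 2 / (1 + t ^ 2) = (1 + t ^ 2)⁻¹ := by field_simp; ring
  have h3 : ((1 + t ^ 2) ^ 2)⁻¹ = (1 + t ^ 2) ^ (-2 : ℝ) := by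
    rw [rpow_neg hd.le, rpow_two]
  rw [h1, h2, inv_rpow hd.le, ← rpow_neg hd.le, abs_of_pos (by positivity),
    div_eq_mul_inv _ (_ ^ 2), h3]
  field_simp
  rw [mul_comm, ← rpow_add hd, ← rpow_add hd]
  ring_nf

theorem integral_one_add_sq_rpow_neg {s : ℝ} (hs : 1 / 2 < s) :
    ∫ t in Ioi (0 : ℝ), (1 + t ^ 2) ^ (-s) = √π * Gamma (s - 1 / 2) / (2 * Gamma s) := by
  have hderiv : ∀ t ∈ Ioi (0 : ℝ), HasDerivWithinAt (fun t => t ^ 2 / (1 + t ^ 2))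
      (2 * t / (1 + t ^ 2) ^ 2) (Ioi 0) t := fun t _ => by
    have h := (hasDerivAt_pow 2 t).div ((hasDerivAt_pow 2 t).const_add 1) (by positivity)
    exact (h.congr_deriv (by push_cast; ring)).hasDerivWithinAt
  have hsub := integral_image_eq_integral_abs_deriv_smul measurableSet_Ioi hderiv
    strictMonoOn_sq_div_one_add_sq.injOn fun x => x ^ (1 / 2 - 1 : ℝ) * (1 - x) ^ (s - 1 / 2 - 1)
  simp only [smul_eq_mul] at hsub
  rw [image_sq_div_one_add_sq_Ioi, integral_Ioo_rpow_mul_one_sub_rpow (by norm_num) (by linarith),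
    setIntegral_congr_fun measurableSet_Ioi fun t ht => abs_deriv_mul_beta_integrand s ht,
    integral_const_mul, Gamma_one_half_eq, add_sub_cancel] at hsub
  rw [mul_comm 2, ← div_div, hsub]
  ring

theorem integral_sq_add_sq_rpow_neg {a s : ℝ} (ha : 0 < a) (hs : 1 / 2 < s) :
    ∫ r in Ioi (0 : ℝ), (a ^ 2 + r ^ 2) ^ (-s) =
      a ^ (1 - 2 * s) * (√π * Gamma (s - 1 / 2) / (2 * Gamma s)) := by
  have hscale : ∀ r : ℝ,
      (a ^ 2 + r ^ 2) ^ (-s) = a ^ (-(2 * s)) * (1 + (a⁻¹ * r) ^ 2) ^ (-s) := fun r => by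
    rw [show a ^ 2 + r ^ 2 = a ^ 2 * (1 + (a⁻¹ * r) ^ 2) by field_simp,
      mul_rpow (by positivity) (by positivity), ← rpow_natCast, ← rpow_mul ha.le]
    push_cast
    ring_nf
  simp_rw [hscale]
  rw [integral_const_mul, integral_comp_mul_left_Ioi (fun t => (1 + t ^ 2) ^ (-s)) 0 (inv_pos.2 ha),
    mul_zero, inv_inv, integral_one_add_sq_rpow_neg hs, smul_eq_mul, ← mul_assoc,
    ← rpow_add_one ha.ne']
  ring_nf

theorem integral_two_mul_div_sq_add_sq_rpow {a μ : ℝ} (ha : 0 < a) (hμ : -(1 / 2) < μ) :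
    ∫ r in Ioi (0 : ℝ), 2 * a / (a ^ 2 + r ^ 2) ^ (μ + 1) =
      a ^ (-(2 * μ)) * (√π * Gamma (μ + 1 / 2) / Gamma (μ + 1)) := by
  simp_rw [div_eq_mul_inv, ← rpow_neg (add_nonneg (sq_nonneg a) (sq_nonneg _))]
  rw [integral_const_mul, integral_sq_add_sq_rpow_neg ha (by linarith),
    show μ + 1 - 1 / 2 = μ + 1 / 2 by ring, show -(2 * μ) = 1 - 2 * (μ + 1) + 1 by ring,
    rpow_add_one ha.ne']
  field_simp

theorem integrableOn_two_mul_div_sq_add_sq_rpow {a μ : ℝ} (ha : 0 < a) (hμ : -(1 / 2) < μ) :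
    IntegrableOn (fun r => 2 * a / (a ^ 2 + r ^ 2) ^ (μ + 1)) (Ioi 0) := by
  refine Integrable.of_integral_ne_zero ?_
  rw [integral_two_mul_div_sq_add_sq_rpow ha hμ]
  have := Gamma_pos_of_pos (by linarith : 0 < μ + 1 / 2)
  have := Gamma_pos_of_pos (by linarith : 0 < μ + 1)
  positivity

theorem stmt11 (μ : ℝ) (hμ : 1 / 2 < μ) :
    ∫ r in Set.Ioi (0 : ℝ), mathieuS μ r =
      Real.sqrt π * Real.Gamma (μ + 1 / 2) * zetaR (2 * μ) / Real.Gamma (μ + 1) := by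
  have ha (n : ℕ) : (0 : ℝ) < n + 1 := n.cast_add_one_pos
  have hμ' : -(1 / 2) < μ := by linarith
  have hterm (n : ℕ) := integral_two_mul_div_sq_add_sq_rpow (ha n) hμ'
  have hnorm (n : ℕ) :
      ∫ r in Ioi (0 : ℝ), ‖2 * ((n : ℝ) + 1) / (((n : ℝ) + 1) ^ 2 + r ^ 2) ^ (μ + 1)‖ =
        ∫ r in Ioi (0 : ℝ), 2 * ((n : ℝ) + 1) / (((n : ℝ) + 1) ^ 2 + r ^ 2) ^ (μ + 1) :=
    integral_congr_ae <| .of_forall fun r => norm_of_nonneg (by positivity)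
  have hζ : Summable fun n : ℕ => ((n : ℝ) + 1) ^ (-(2 * μ)) := by
    exact_mod_cast (summable_nat_add_iff 1).2 (summable_nat_rpow.2 (by linarith))
  unfold mathieuS
  rw [← integral_tsum_of_summable_integral_norm
      (fun n => integrableOn_two_mul_div_sq_add_sq_rpow (ha n) hμ')
      (by simpa only [hnorm, hterm] using hζ.mul_right _),
    tsum_congr hterm, tsum_mul_right, zetaR]
  ring
end

section
/- For every μ ≥ 1, the Riemann zeta function satisfies ζ(2μ) ≤ √(3π/2) · Γ(μ+1)/Γ(μ+1/2). -/
open Real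

lemma basel_shift : HasSum (fun n : ℕ => (1 : ℝ) / ((n : ℝ) + 1) ^ 2) (π ^ 2 / 6) := by
  have h := hasSum_zeta_two
  have h' := (hasSum_nat_add_iff' (f := fun n : ℕ => (1 : ℝ) / (n : ℝ) ^ 2) 1).mpr h
  simpa using h'

lemma zetaR_le_two (μ : ℝ) (hμ : 1 ≤ μ) : zetaR (2 * μ) ≤ 2 := by
  have hterm : ∀ n : ℕ, ((n : ℝ) + 1) ^ (-(2 * μ)) ≤ (1 : ℝ) / ((n : ℝ) + 1) ^ 2 := by
    intro n
    have h1 : (1 : ℝ) ≤ (n : ℝ) + 1 := by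
      have := Nat.cast_nonneg (α := ℝ) n; linarith
    have h2 : ((n : ℝ) + 1) ^ (-(2 * μ)) ≤ ((n : ℝ) + 1) ^ (-2 : ℝ) :=
      rpow_le_rpow_of_exponent_le h1 (by linarith)
    calc ((n : ℝ) + 1) ^ (-(2 * μ)) ≤ ((n : ℝ) + 1) ^ (-2 : ℝ) := h2
      _ = (1 : ℝ) / ((n : ℝ) + 1) ^ 2 := by
        rw [rpow_neg (by positivity), one_div, ← rpow_natCast ((n : ℝ) + 1) 2]
        norm_num
  have hnonneg : ∀ n : ℕ, 0 ≤ ((n : ℝ) + 1) ^ (-(2 * μ)) := by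
    intro n; positivity
  have hsum : Summable (fun n : ℕ => ((n : ℝ) + 1) ^ (-(2 * μ))) :=
    Summable.of_nonneg_of_le hnonneg hterm basel_shift.summable
  have hle : zetaR (2 * μ) ≤ π ^ 2 / 6 := by
    rw [zetaR, ← basel_shift.tsum_eq]
    exact Summable.tsum_le_tsum hterm hsum basel_shift.summable
  have hpi : π ≤ 3.15 := pi_lt_d2.le
  nlinarith [pi_pos]

theorem stmt12 (μ : ℝ) (hμ : 1 ≤ μ) :
    zetaR (2 * μ) ≤ Real.sqrt (3 * π / 2) * Real.Gamma (μ + 1) / Real.Gamma (μ + 1 / 2) := by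
  have hpos : 0 < Real.Gamma (μ + 1 / 2) := Real.Gamma_pos_of_pos (by linarith)
  have hmono := Real.Gamma_strictMonoOn_Ici.monotoneOn
  have hG2 : Real.Gamma 2 = 1 := Real.Gamma_two
  have hG1 : Real.Gamma (μ + 1 / 2) ≤ Real.Gamma (μ + 1) := by
    rcases le_or_gt (3 / 2) μ with h | h
    · exact hmono (by simp only [Set.mem_Ici]; linarith)
        (by simp only [Set.mem_Ici]; linarith) (by linarith)
    · -- μ + 1/2 ∈ [1, 2], so Γ(μ+1/2) ≤ max Γ(1) Γ(2) = 1 ≤ Γ(μ+1)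
      have h1 : Real.Gamma (μ + 1 / 2) ≤ max (Real.Gamma 1) (Real.Gamma 2) := by
        apply Real.convexOn_Gamma.le_on_segment (by norm_num) (by norm_num)
        rw [segment_eq_Icc (by norm_num : (1 : ℝ) ≤ 2)]
        constructor <;> linarith
      have h2 : Real.Gamma 2 ≤ Real.Gamma (μ + 1) :=
        hmono (by simp) (by simp only [Set.mem_Ici]; linarith) (by linarith)
      rw [Real.Gamma_one, hG2] at h1
      simp only [max_self] at h1
      linarith
  have hsqrt : (2 : ℝ) ≤ Real.sqrt (3 * π / 2) := by
    rw [Real.le_sqrt (by norm_num) (by positivity)]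
    nlinarith [pi_gt_three]
  have hratio : (1 : ℝ) ≤ Real.Gamma (μ + 1) / Real.Gamma (μ + 1 / 2) :=
    (one_le_div hpos).mpr hG1
  have : (2 : ℝ) ≤ Real.sqrt (3 * π / 2) * Real.Gamma (μ + 1) / Real.Gamma (μ + 1 / 2) := by
    rw [mul_div_assoc]
    nlinarith [Real.sqrt_nonneg (3 * π / 2)]
  linarith [zetaR_le_two μ hμ]
end

section
/- For every μ ≥ 1, the inequality ζ(2μ+1)^{3/2} / (ζ(2μ)² · ζ(2μ+3)) ≤ (μ+1) · Γ(μ+1/2)² / Γ(μ+1)² holds. -/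
open Real

lemma zetaR_summable {s : ℝ} (hs : 1 < s) :
    Summable (fun n : ℕ => ((n : ℝ) + 1) ^ (-s)) := by
  have h : Summable (fun n : ℕ => (n : ℝ) ^ (-s)) :=
    Real.summable_nat_rpow.mpr (by linarith)
  have := h.comp_injective (add_left_injective 1)
  refine this.congr fun n => ?_
  simp [Function.comp]

lemma one_le_zetaR {s : ℝ} (hs : 1 < s) : 1 ≤ zetaR s := by
  have h := zetaR_summable hs
  have h0 : ((0 : ℕ) + 1 : ℝ) ^ (-s) ≤ zetaR s :=
    Summable.le_tsum h 0 fun n _ => by positivity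
  simpa using h0

lemma zetaR_anti {s t : ℝ} (hs : 1 < s) (hst : s ≤ t) : zetaR t ≤ zetaR s := by
  refine Summable.tsum_le_tsum (fun n => ?_) (zetaR_summable (lt_of_lt_of_le hs hst)) (zetaR_summable hs)
  exact Real.rpow_le_rpow_of_exponent_le (by linarith [Nat.cast_nonneg (α := ℝ) n]) (by linarith)

theorem stmt13 (μ : ℝ) (hμ : 1 ≤ μ) :
    zetaR (2 * μ + 1) ^ ((3 : ℝ) / 2) / (zetaR (2 * μ) ^ 2 * zetaR (2 * μ + 3)) ≤
      (μ + 1) * Real.Gamma (μ + 1 / 2) ^ 2 / Real.Gamma (μ + 1) ^ 2 := by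
  have h2μ : (1 : ℝ) < 2 * μ := by linarith
  have hz2 := one_le_zetaR h2μ
  have hz1 : 1 ≤ zetaR (2 * μ + 1) := one_le_zetaR (by linarith)
  have hz3 : 1 ≤ zetaR (2 * μ + 3) := one_le_zetaR (by linarith)
  have hanti : zetaR (2 * μ + 1) ≤ zetaR (2 * μ) := zetaR_anti h2μ (by linarith)
  -- LHS ≤ 1
  have hL : zetaR (2 * μ + 1) ^ ((3 : ℝ) / 2) / (zetaR (2 * μ) ^ 2 * zetaR (2 * μ + 3)) ≤ 1 := by
    rw [div_le_one (by positivity)]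
    calc zetaR (2 * μ + 1) ^ ((3 : ℝ) / 2)
        ≤ zetaR (2 * μ) ^ ((3 : ℝ) / 2) :=
          Real.rpow_le_rpow (by linarith) hanti (by norm_num)
      _ ≤ zetaR (2 * μ) ^ ((2 : ℝ)) :=
          Real.rpow_le_rpow_of_exponent_le hz2 (by norm_num)
      _ = zetaR (2 * μ) ^ 2 := by rw [Real.rpow_two]
      _ ≤ zetaR (2 * μ) ^ 2 * zetaR (2 * μ + 3) := le_mul_of_one_le_right (by positivity) hz3
  -- RHS ≥ 1
  have hΓa : 0 < Real.Gamma (μ + 1 / 2) := Real.Gamma_pos_of_pos (by linarith)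
  have hΓb : 0 < Real.Gamma (μ + 3 / 2) := Real.Gamma_pos_of_pos (by linarith)
  have hΓc : 0 < Real.Gamma (μ + 1) := Real.Gamma_pos_of_pos (by linarith)
  have hconv := Real.Gamma_mul_add_mul_le_rpow_Gamma_mul_rpow_Gamma
    (s := μ + 1 / 2) (t := μ + 3 / 2) (a := 1 / 2) (b := 1 / 2)
    (by linarith) (by linarith) (by norm_num) (by norm_num) (by norm_num)
  have heq : (1 / 2 : ℝ) * (μ + 1 / 2) + 1 / 2 * (μ + 3 / 2) = μ + 1 := by ring
  rw [heq] at hconv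
  have hsq : Real.Gamma (μ + 1) ^ 2 ≤ Real.Gamma (μ + 1 / 2) * Real.Gamma (μ + 3 / 2) := by
    have := mul_le_mul hconv hconv (le_of_lt hΓc) (by positivity)
    calc Real.Gamma (μ + 1) ^ 2 = Real.Gamma (μ + 1) * Real.Gamma (μ + 1) := sq _
      _ ≤ (Real.Gamma (μ + 1/2) ^ ((1:ℝ)/2) * Real.Gamma (μ + 3/2) ^ ((1:ℝ)/2)) *
          (Real.Gamma (μ + 1/2) ^ ((1:ℝ)/2) * Real.Gamma (μ + 3/2) ^ ((1:ℝ)/2)) := this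
      _ = (Real.Gamma (μ + 1/2) ^ ((1:ℝ)/2) * Real.Gamma (μ + 1/2) ^ ((1:ℝ)/2)) *
          (Real.Gamma (μ + 3/2) ^ ((1:ℝ)/2) * Real.Gamma (μ + 3/2) ^ ((1:ℝ)/2)) := by ring
      _ = Real.Gamma (μ + 1/2) * Real.Gamma (μ + 3/2) := by
          rw [← Real.rpow_add hΓa, ← Real.rpow_add hΓb]; norm_num
  have hrec : Real.Gamma (μ + 3 / 2) = (μ + 1 / 2) * Real.Gamma (μ + 1 / 2) := by
    have : μ + 3 / 2 = (μ + 1 / 2) + 1 := by ring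
    rw [this, Real.Gamma_add_one (by positivity)]
  rw [hrec] at hsq
  have hR : (1 : ℝ) ≤ (μ + 1) * Real.Gamma (μ + 1 / 2) ^ 2 / Real.Gamma (μ + 1) ^ 2 := by
    rw [le_div_iff₀ (by positivity), one_mul]
    calc Real.Gamma (μ + 1) ^ 2 ≤ (μ + 1/2) * Real.Gamma (μ + 1/2) ^ 2 := by
          nlinarith [hsq]
      _ ≤ (μ + 1) * Real.Gamma (μ + 1/2) ^ 2 := by nlinarith [sq_nonneg (Real.Gamma (μ + 1/2))]
  linarith
end

section
/- For all μ > 0 and r > 0, the inequality 2·ζ(2μ+1)·exp(−(μ+1)·(ζ(2μ+3)/ζ(2μ+1))·r²) ≤ S_μ(r) holds. -/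
open Real

lemma summable_aux (s : ℝ) (hs : 1 < s) : Summable (fun n : ℕ ↦ ((n:ℝ)+1) ^ (-s)) := by
  have h := Real.summable_nat_rpow.mpr (show -s < -1 by linarith)
  have h2 := (summable_nat_add_iff 1).mpr h
  simpa using h2

lemma pow_div_aux (a μ : ℝ) (ha : 0 < a) : a / a ^ (2*μ+2) = a ^ (-(2*μ+1)) := by
  rw [div_eq_iff (by positivity : (a:ℝ) ^ (2*μ+2) ≠ 0), ← Real.rpow_add ha,
    show -(2*μ+1) + (2*μ+2) = 1 by ring, Real.rpow_one]

lemma pow_sq_aux (a μ : ℝ) (ha : 0 < a) : (a^2 : ℝ) ^ (μ+1) = a ^ (2*μ+2) := by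
  rw [← Real.rpow_natCast a 2, ← Real.rpow_mul ha.le]
  norm_num; ring_nf

lemma term_lb (μ x : ℝ) (hμ : 0 < μ) (hx : 0 < x) (n : ℕ) :
    2 * ((n:ℝ)+1) ^ (-(2*μ+1)) * Real.exp (-(μ+1)*x/((n:ℝ)+1)^2)
      ≤ 2 * ((n:ℝ)+1) / ((((n:ℝ)+1)^2 + x) ^ (μ+1)) := by
  set a : ℝ := (n:ℝ)+1 with ha
  have ha0 : 0 < a := by positivity
  have hkey : (a^2 + x) ^ (μ+1) ≤ a ^ (2*μ+2) * Real.exp ((μ+1)*x/a^2) := by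
    have h1 : a^2 + x = a^2 * (1 + x/a^2) := by field_simp
    rw [h1, Real.mul_rpow (by positivity) (by positivity), pow_sq_aux a μ ha0]
    gcongr
    calc (1 + x/a^2) ^ (μ+1) ≤ (Real.exp (x/a^2)) ^ (μ+1) := by
          apply Real.rpow_le_rpow (by positivity)
            (by linarith [Real.add_one_le_exp (x/a^2)]) (by linarith)
      _ = Real.exp ((x/a^2) * (μ+1)) := (Real.exp_mul _ _).symm
      _ = Real.exp ((μ+1)*x/a^2) := by ring_nf
  have hstep : 2 * a / (a ^ (2*μ+2) * Real.exp ((μ+1)*x/a^2)) ≤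
      2 * a / ((a^2 + x) ^ (μ+1)) := by
    apply div_le_div_of_nonneg_left (by positivity) (by positivity) hkey
  refine le_trans (le_of_eq ?_) hstep
  rw [show -(μ+1)*x/a^2 = -((μ+1)*x/a^2) by ring, Real.exp_neg, ← pow_div_aux a μ ha0]
  field_simp

lemma term_ub (μ x : ℝ) (hμ : 0 < μ) (hx : 0 < x) (n : ℕ) :
    2*((n:ℝ)+1)/((((n:ℝ)+1)^2+x)^(μ+1)) ≤ 2*((n:ℝ)+1)^(-(2*μ+1)) := by
  set a : ℝ := (n:ℝ)+1 with ha
  have ha0 : 0 < a := by positivity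
  have h : a^(2*μ+2) ≤ (a^2+x)^(μ+1) := by
    rw [← pow_sq_aux a μ ha0]
    exact Real.rpow_le_rpow (by positivity) (by linarith) (by linarith)
  calc 2*a/(a^2+x)^(μ+1) ≤ 2*a/a^(2*μ+2) :=
        div_le_div_of_nonneg_left (by positivity) (by positivity) h
    _ = 2*a^(-(2*μ+1)) := by rw [mul_div_assoc, pow_div_aux a μ ha0]

lemma g_le_term (μ x m : ℝ) (hμ : 0 < μ) (hx : 0 < x) (n : ℕ) :
    Real.exp m * ((2*(1-m)) * ((n:ℝ)+1)^(-(2*μ+1)) + (-(2*(μ+1)*x)) * ((n:ℝ)+1)^(-(2*μ+3)))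
      ≤ 2*((n:ℝ)+1)/((((n:ℝ)+1)^2+x)^(μ+1)) := by
  set a : ℝ := (n:ℝ)+1 with ha
  have ha0 : 0 < a := by positivity
  have hsplit : a^(-(2*μ+3)) = a^(-(2*μ+1)) / a^2 := by
    rw [show -(2*μ+3) = -(2*μ+1) + (-2 : ℝ) by ring, Real.rpow_add ha0, div_eq_mul_inv]
    congr 1
    rw [show ((-2 : ℝ)) = -((2:ℕ):ℝ) by norm_num, Real.rpow_neg ha0.le, Real.rpow_natCast]
  refine le_trans ?_ (term_lb μ x hμ hx n)
  have h1 : Real.exp m * ((-(μ+1)*x/a^2) - m + 1) ≤ Real.exp (-(μ+1)*x/a^2) := by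
    calc Real.exp m * ((-(μ+1)*x/a^2) - m + 1)
        ≤ Real.exp m * Real.exp ((-(μ+1)*x/a^2) - m) :=
          mul_le_mul_of_nonneg_left (Real.add_one_le_exp _) (Real.exp_pos m).le
      _ = Real.exp (-(μ+1)*x/a^2) := by rw [← Real.exp_add]; ring_nf
  have hLHSeq : Real.exp m * ((2*(1-m)) * a^(-(2*μ+1)) + (-(2*(μ+1)*x)) * a^(-(2*μ+3)))
      = 2 * a^(-(2*μ+1)) * (Real.exp m * ((-(μ+1)*x/a^2) - m + 1)) := by
    rw [hsplit]; field_simp; ring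
  rw [hLHSeq]
  calc 2 * a^(-(2*μ+1)) * (Real.exp m * ((-(μ+1)*x/a^2) - m + 1))
      ≤ 2 * a^(-(2*μ+1)) * Real.exp (-(μ+1)*x/a^2) :=
        mul_le_mul_of_nonneg_left h1 (by positivity)

theorem stmt15 (μ r : ℝ) (hμ : 0 < μ) (hr : 0 < r) :
    2 * zetaR (2 * μ + 1) *
      Real.exp (-(μ + 1) * (zetaR (2 * μ + 3) / zetaR (2 * μ + 1)) * r ^ 2) ≤
      mathieuS μ r := by
  have hx : 0 < r^2 := by positivity
  set x : ℝ := r^2 with hxdef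
  have hS1 : Summable (fun n : ℕ ↦ ((n:ℝ)+1) ^ (-(2*μ+1))) := summable_aux _ (by linarith)
  have hS3 : Summable (fun n : ℕ ↦ ((n:ℝ)+1) ^ (-(2*μ+3))) := summable_aux _ (by linarith)
  set A : ℝ := zetaR (2*μ+1) with hA
  set B : ℝ := zetaR (2*μ+3) with hB
  have hApos : 0 < A := Summable.tsum_pos hS1 (fun i ↦ by positivity) 0 (by positivity)
  set m : ℝ := -(μ+1) * (B/A) * x with hm
  have hmA : m * A = -(μ+1) * B * x := by
    rw [hm]; field_simp
  set g : ℕ → ℝ := fun n ↦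
    Real.exp m * ((2*(1-m)) * ((n:ℝ)+1)^(-(2*μ+1)) + (-(2*(μ+1)*x)) * ((n:ℝ)+1)^(-(2*μ+3)))
    with hg
  have hgsum : Summable g := (((hS1.mul_left _).add (hS3.mul_left _)).mul_left _)
  have htsumg : ∑' n, g n = 2 * A * Real.exp m := by
    rw [hg, tsum_mul_left, Summable.tsum_add (hS1.mul_left _) (hS3.mul_left _), tsum_mul_left,
      tsum_mul_left]
    have hA' : ∑' n : ℕ, ((n:ℝ)+1)^(-(2*μ+1)) = A := rfl
    have hB' : ∑' n : ℕ, ((n:ℝ)+1)^(-(2*μ+3)) = B := rfl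
    rw [hA', hB']
    linear_combination (-2 * Real.exp m) * hmA
  have hfsum : Summable (fun n : ℕ ↦ 2*((n:ℝ)+1)/((((n:ℝ)+1)^2+x)^(μ+1))) := by
    apply Summable.of_nonneg_of_le (fun n ↦ by positivity) (fun n ↦ term_ub μ x hμ hx n)
      (hS1.mul_left 2)
  have hmain : ∑' n, g n ≤ ∑' n : ℕ, 2*((n:ℝ)+1)/((((n:ℝ)+1)^2+x)^(μ+1)) :=
    Summable.tsum_le_tsum (fun n ↦ g_le_term μ x m hμ hx n) hgsum hfsum
  rw [htsumg] at hmain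
  have hSeq : mathieuS μ r = ∑' n : ℕ, 2*((n:ℝ)+1)/((((n:ℝ)+1)^2+x)^(μ+1)) := rfl
  rw [hSeq]
  exact hmain
end

section
/- For μ > 1, the Turán type inequality ζ(μ)·ζ(μ+2) ≥ ζ(μ+1)² is sharper than the Laforgia–Natalini bound: ζ(μ+1)² ≥ (μ/(μ+1))·ζ(μ+1)², hence ζ(μ)·ζ(μ+2) ≥ (μ/(μ+1))·ζ(μ+1)². -/
open Real

/-! Cauchy–Schwarz for the sequences `(n+1)^(-s/2)` and `(n+1)^(-t/2)` shows that `ζ` is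
midpoint log-convex, `ζ((s+t)/2)² ≤ ζ(s) ζ(t)`; with `s = μ`, `t = μ + 2` this is the Turán type
inequality, and the Laforgia–Natalini factor `μ/(μ+1)` is at most `1`. -/

theorem sq_tsum_mul_le_of_nonneg {ι : Type*} {f g : ι → ℝ} (hf : ∀ i, 0 ≤ f i)
    (hg : ∀ i, 0 ≤ g i) (hf_sum : Summable fun i => f i ^ 2)
    (hg_sum : Summable fun i => g i ^ 2) :
    (∑' i, f i * g i) ^ 2 ≤ (∑' i, f i ^ 2) * ∑' i, g i ^ 2 := by
  have holder := inner_le_Lp_mul_Lq_tsum_of_nonneg (p := 2) (q := 2) .two_two hf hg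
    (by simpa only [rpow_two] using hf_sum) (by simpa only [rpow_two] using hg_sum)
  simp only [rpow_two] at holder
  rw [← sqrt_eq_rpow, ← sqrt_eq_rpow] at holder
  calc (∑' i, f i * g i) ^ 2 ≤ (√(∑' i, f i ^ 2) * √(∑' i, g i ^ 2)) ^ 2 :=
        pow_le_pow_left₀ (tsum_nonneg fun i => mul_nonneg (hf i) (hg i)) holder 2
    _ = (∑' i, f i ^ 2) * ∑' i, g i ^ 2 := by
        rw [mul_pow, sq_sqrt (tsum_nonneg fun i => sq_nonneg _),
          sq_sqrt (tsum_nonneg fun i => sq_nonneg _)]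

theorem summable_nat_add_one_rpow_neg {s : ℝ} (hs : 1 < s) :
    Summable fun n : ℕ => ((n : ℝ) + 1) ^ (-s) := by
  refine ((summable_one_div_nat_add_rpow 1 s).mpr hs).congr fun n => ?_
  rw [abs_of_nonneg (by positivity), one_div, ← rpow_neg (by positivity)]

theorem rpow_neg_half_sq {x : ℝ} (hx : 0 ≤ x) (s : ℝ) : (x ^ (-(s / 2))) ^ 2 = x ^ (-s) := by
  rw [← rpow_natCast, ← rpow_mul hx]
  ring_nf

theorem zetaR_sq_le_mul {s t : ℝ} (hs : 1 < s) (ht : 1 < t) :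
    zetaR ((s + t) / 2) ^ 2 ≤ zetaR s * zetaR t := by
  have hpos (n : ℕ) : (0 : ℝ) < n + 1 := by positivity
  have hmul (n : ℕ) : ((n : ℝ) + 1) ^ (-(s / 2)) * ((n : ℝ) + 1) ^ (-(t / 2)) =
      ((n : ℝ) + 1) ^ (-((s + t) / 2)) := by
    rw [← rpow_add (hpos n)]; ring_nf
  have cs := sq_tsum_mul_le_of_nonneg (fun n => (rpow_pos_of_pos (hpos n) (-(s / 2))).le)
    (fun n => (rpow_pos_of_pos (hpos n) (-(t / 2))).le)
    (by simpa only [rpow_neg_half_sq (hpos _).le] using summable_nat_add_one_rpow_neg hs)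
    (by simpa only [rpow_neg_half_sq (hpos _).le] using summable_nat_add_one_rpow_neg ht)
  simpa only [zetaR, hmul, rpow_neg_half_sq (hpos _).le] using cs

theorem stmt19 (μ : ℝ) (hμ : 1 < μ) :
    zetaR μ * zetaR (μ + 2) ≥ zetaR (μ + 1) ^ 2 ∧
    zetaR (μ + 1) ^ 2 ≥ (μ / (μ + 1)) * zetaR (μ + 1) ^ 2 ∧
    zetaR μ * zetaR (μ + 2) ≥ (μ / (μ + 1)) * zetaR (μ + 1) ^ 2 := by
  have turan : zetaR (μ + 1) ^ 2 ≤ zetaR μ * zetaR (μ + 2) := by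
    simpa only [show (μ + (μ + 2)) / 2 = μ + 1 by ring] using
      zetaR_sq_le_mul (t := μ + 2) hμ (by linarith)
  have laforgia_natalini : μ / (μ + 1) * zetaR (μ + 1) ^ 2 ≤ zetaR (μ + 1) ^ 2 :=
    mul_le_of_le_one_left (sq_nonneg _) ((div_le_one (by linarith)).mpr (by linarith))
  exact ⟨turan, laforgia_natalini, laforgia_natalini.trans turan⟩
end
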